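/- For all ω, φ in the piecewise polynomial space V_h^k (with periodic trace identification), L^−(ω,φ) + L^−(φ,ω) = Σ_{j=1}^N [ω]_{j+1/2} [φ]_{j+1/2}. -/

import Mathlib

open Polynomial Set

noncomputable section

namespace FW

variable {N : ℕ}

/-- Minus trace `ω⁻` at interface `j+1/2` (right end of cell `j`). -/
def trM (x : Fin (N + 1) → ℝ) (ω : Fin N → Polynomial ℝ) (j : Fin N) : ℝ :=
  (ω j).eval (x j.succ)

/-- Plus trace `ω⁺` at interface `j+1/2` (left end of the next cell, cyclically). -/
def trP [NeZero N] (x : Fin (N + 1) → ℝ) (ω : Fin N → Polynomial ℝ) (j : Fin N) : ℝ :=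
  (ω (j + 1)).eval (x (j + 1).castSucc)

/-- Average trace `{ω}`. -/
def trA [NeZero N] (x : Fin (N + 1) → ℝ) (ω : Fin N → Polynomial ℝ) (j : Fin N) : ℝ :=
  (trP x ω j + trM x ω j) / 2

/-- Jump `[ω]`. -/
def jmp [NeZero N] (x : Fin (N + 1) → ℝ) (ω : Fin N → Polynomial ℝ) (j : Fin N) : ℝ :=
  trP x ω j - trM x ω j

/-- Cell L² pairing `(u, φ)_{I_j}` of a piecewise polynomial with a test polynomial. -/
def ipj (x : Fin (N + 1) → ℝ) (u : Fin N → Polynomial ℝ) (j : Fin N) (φ : Polynomial ℝ) : ℝ :=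
  ∫ t in (x j.castSucc)..(x j.succ), (u j).eval t * φ.eval t

/-- Cell pairing `(f∘u, φ)_{I_j}`. -/
def ipfj (x : Fin (N + 1) → ℝ) (f : ℝ → ℝ) (u : Fin N → Polynomial ℝ) (j : Fin N)
    (φ : Polynomial ℝ) : ℝ :=
  ∫ t in (x j.castSucc)..(x j.succ), f ((u j).eval t) * φ.eval t

/-- Boundary pairing `⟨g, φ⟩_{I_j}` for interface values `g`. -/
def bdj [NeZero N] (x : Fin (N + 1) → ℝ) (g : Fin N → ℝ) (j : Fin N) (φ : Polynomial ℝ) : ℝ :=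
  g j * φ.eval (x j.succ) - g (j - 1) * φ.eval (x j.castSucc)

/-- Membership in the space `V_h^k` of piecewise polynomials of degree at most `k`. -/
def memV (k : ℕ) (ω : Fin N → Polynomial ℝ) : Prop :=
  ∀ j, (ω j).degree ≤ (k : WithBot ℕ)

/-- `L⁻(ω, φ)`. -/
def Lm [NeZero N] (x : Fin (N + 1) → ℝ) (ω φ : Fin N → Polynomial ℝ) : ℝ :=
  ∑ j, (-(ipj x ω j (derivative (φ j))) + bdj x (trM x ω) j (φ j))

/-- `L⁺(ω, φ)`. -/
def Lp [NeZero N] (x : Fin (N + 1) → ℝ) (ω φ : Fin N → Polynomial ℝ) : ℝ :=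
  ∑ j, (-(ipj x ω j (derivative (φ j))) + bdj x (trP x ω) j (φ j))

/-- `L^c(ω, φ)`. -/
def Lc [NeZero N] (x : Fin (N + 1) → ℝ) (ω φ : Fin N → Polynomial ℝ) : ℝ :=
  ∑ j, (-(ipj x ω j (derivative (φ j))) + bdj x (trA x ω) j (φ j))

/-- Godunov numerical flux. -/
def godunov (f : ℝ → ℝ) (c d : ℝ) : ℝ :=
  if c < d then sInf (f '' Set.Icc c d) else sSup (f '' Set.Icc d c)

/-- Conservative numerical flux for `f(u) = u^p/p`, `F(u) = u^(p+1)/(p(p+1))`. -/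
def consFlux (p : ℕ) (c d : ℝ) : ℝ :=
  if c = d then c ^ p / (p : ℝ)
  else (d ^ (p + 1) / ((p : ℝ) * ((p : ℝ) + 1)) - c ^ (p + 1) / ((p : ℝ) * ((p : ℝ) + 1))) / (d - c)

/-- Dissipative (Godunov-flux) nonlinear form `N^d`. -/
def Nd [NeZero N] (x : Fin (N + 1) → ℝ) (f : ℝ → ℝ) (ω φ : Fin N → Polynomial ℝ) : ℝ :=
  ∑ j, (-(ipfj x f ω j (derivative (φ j)))
    + bdj x (fun i => godunov f (trM x ω i) (trP x ω i)) j (φ j))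

/-- Conservative-flux nonlinear form `N^c`. -/
def Nc [NeZero N] (x : Fin (N + 1) → ℝ) (p : ℕ) (ω φ : Fin N → Polynomial ℝ) : ℝ :=
  ∑ j, (-(ipfj x (fun w => w ^ p / (p : ℝ)) ω j (derivative (φ j)))
    + bdj x (fun i => consFlux p (trM x ω i) (trP x ω i)) j (φ j))

end FW

/-!
Integrating by parts on each cell, the volume terms of `L⁻(ω, φ) + L⁻(φ, ω)` become boundary
products: the cell `I_j` contributes `ω⁻φ⁻` at `x_{j+1/2}` and
`ω⁺φ⁺ - ω⁻φ⁺ - φ⁻ω⁺ = [ω][φ] - ω⁻φ⁻` at `x_{j-1/2}`. Summing over the periodic mesh, the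
`ω⁻φ⁻` terms cancel and only the jump products remain.
-/

theorem Polynomial.integral_eval_mul_derivative_add (p q : ℝ[X]) (a b : ℝ) :
    (∫ t in a..b, p.eval t * (derivative q).eval t)
      + ∫ t in a..b, q.eval t * (derivative p).eval t
      = p.eval b * q.eval b - p.eval a * q.eval a := by
  rw [← intervalIntegral.integral_add (f := fun t => p.eval t * (derivative q).eval t)
    (g := fun t => q.eval t * (derivative p).eval t)
    ((p.continuous.mul (derivative q).continuous).intervalIntegrable a b)
    ((q.continuous.mul (derivative p).continuous).intervalIntegrable a b),
    ← intervalIntegral.integral_deriv_mul_eq_sub (fun t _ => p.hasDerivAt t)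
      (fun t _ => q.hasDerivAt t) ((derivative p).continuous.intervalIntegrable a b)
      ((derivative q).continuous.intervalIntegrable a b)]
  congr 1 with t
  ring

namespace FW

variable {N : ℕ} [NeZero N]

theorem trP_sub_one (x : Fin (N + 1) → ℝ) (ω : Fin N → ℝ[X]) (j : Fin N) :
    trP x ω (j - 1) = (ω j).eval (x j.castSucc) := by
  simp only [trP, sub_add_cancel]

theorem Lm_summand_add_swap (x : Fin (N + 1) → ℝ) (ω φ : Fin N → ℝ[X]) (j : Fin N) :
    (-(ipj x ω j (derivative (φ j))) + bdj x (trM x ω) j (φ j))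
      + (-(ipj x φ j (derivative (ω j))) + bdj x (trM x φ) j (ω j))
      = trM x ω j * trM x φ j
        + (jmp x ω (j - 1) * jmp x φ (j - 1) - trM x ω (j - 1) * trM x φ (j - 1)) := by
  have hibp := (ω j).integral_eval_mul_derivative_add (φ j) (x j.castSucc) (x j.succ)
  simp only [ipj, bdj, jmp, trP_sub_one, trM]
  linear_combination -hibp

end FW

theorem stmt4_general {N : ℕ} [NeZero N] (x : Fin (N + 1) → ℝ) (ω φ : Fin N → Polynomial ℝ) :
    FW.Lm x ω φ + FW.Lm x φ ω = ∑ j : Fin N, FW.jmp x ω j * FW.jmp x φ j := by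
  have hshift (g : Fin N → ℝ) : ∑ j, g (j - 1) = ∑ j, g j :=
    (Equiv.subRight 1).sum_comp g
  rw [FW.Lm, FW.Lm, ← Finset.sum_add_distrib]
  simp only [FW.Lm_summand_add_swap, Finset.sum_add_distrib, Finset.sum_sub_distrib]
  rw [hshift fun j => FW.jmp x ω j * FW.jmp x φ j, hshift fun j => FW.trM x ω j * FW.trM x φ j]
  ring

theorem stmt4 {N : ℕ} [NeZero N] (hN : 1 ≤ N) (a b : ℝ) (hab : a < b)
    (x : Fin (N + 1) → ℝ) (hx : StrictMono x) (hxa : x 0 = a) (hxb : x (Fin.last N) = b)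
    (k : ℕ) (ω φ : Fin N → Polynomial ℝ)
    (hω : FW.memV k ω) (hφ : FW.memV k φ) :
    FW.Lm x ω φ + FW.Lm x φ ω = ∑ j : Fin N, FW.jmp x ω j * FW.jmp x φ j :=
  stmt4_general x ω φ
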